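/- arXiv:2204.10453 — 2 statements merged into one kernel-verified Lean document; each statement's English description precedes it below -/
import Mathlib

section
/- For a scalar differential inequality V̇ ≤ -c₁ V^(1+1/μ) - c₂ V^(1-1/μ) with c₁, c₂ > 0 and μ > 1, the time for V to reach 0 from any initial value V₀ > 0 is bounded above by μπ/(2√(c₁c₂)). -/
/-!
Put `k = √(c₁/c₂)` and `p = 1/μ`. While `V > 0`, the differential inequality makes
`arctan (k V^p)` decrease at rate at least `p √(c₁c₂)`: the substitution `y = V^p` turns
`c₁ V^(1+p) + c₂ V^(1-p)` into `V^(1-p) (c₁ y² + c₂)`, which is exactly what the derivative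
of the arctangent cancels. Since `arctan (k V^p)` starts below `π/2` and stays positive
while `V > 0`, `V` cannot stay positive for a time `π / (2 p √(c₁c₂)) = μπ / (2√(c₁c₂))`.
-/

open Real Set

section ArctanPotential

variable {c₁ c₂ p : ℝ}

lemma rpow_sub_one_mul_add_rpow {x : ℝ} (hx : 0 < x) :
    x ^ (p - 1) * (c₁ * x ^ (1 + p) + c₂ * x ^ (1 - p)) = c₁ * (x ^ p) ^ 2 + c₂ := by
  have h₁ : x ^ (p - 1) * x ^ (1 + p) = (x ^ p) ^ 2 := by
    rw [← rpow_add hx, ← rpow_natCast, ← rpow_mul hx.le]; ring_nf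
  have h₂ : x ^ (p - 1) * x ^ (1 - p) = 1 := by
    rw [← rpow_add hx]; ring_nf; exact rpow_zero x
  linear_combination c₁ * h₁ + c₂ * h₂

lemma sqrt_div_mul_add_div_one_add_sq (hc₁ : 0 < c₁) (hc₂ : 0 < c₂) (y : ℝ) :
    √(c₁ / c₂) * (c₁ * y ^ 2 + c₂) / (1 + (√(c₁ / c₂) * y) ^ 2) = √(c₁ * c₂) := by
  have hk : √(c₁ / c₂) * c₂ = √(c₁ * c₂) := by
    rw [show c₁ * c₂ = c₁ / c₂ * c₂ ^ 2 by field_simp, sqrt_mul (div_pos hc₁ hc₂).le,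
      sqrt_sq hc₂.le]
  rw [mul_pow, sq_sqrt (div_pos hc₁ hc₂).le, ← hk]
  field_simp
  ring

lemma hasDerivAt_arctan_mul_rpow_le (hp : 0 < p) (hc₁ : 0 < c₁) (hc₂ : 0 < c₂)
    {V : ℝ → ℝ} {V' t : ℝ} (hV : HasDerivAt V V' t) (hpos : 0 < V t)
    (hV' : V' ≤ -c₁ * V t ^ (1 + p) - c₂ * V t ^ (1 - p)) :
    ∃ D ≤ -(p * √(c₁ * c₂)), HasDerivAt (fun s => arctan (√(c₁ / c₂) * V s ^ p)) D t := by
  set k := √(c₁ / c₂)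
  set x := V t
  refine ⟨_, ?_, ((hV.rpow_const (Or.inl hpos.ne')).const_mul k).arctan⟩
  have hcoef : 0 ≤ k * p * x ^ (p - 1) / (1 + (k * x ^ p) ^ 2) := by positivity
  calc 1 / (1 + (k * x ^ p) ^ 2) * (k * (V' * p * x ^ (p - 1)))
      = k * p * x ^ (p - 1) / (1 + (k * x ^ p) ^ 2) * V' := by ring
    _ ≤ k * p * x ^ (p - 1) / (1 + (k * x ^ p) ^ 2) *
          (-(c₁ * x ^ (1 + p) + c₂ * x ^ (1 - p))) :=
        mul_le_mul_of_nonneg_left (by linarith) hcoef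
    _ = -(p * (k * (c₁ * (x ^ p) ^ 2 + c₂) / (1 + (k * x ^ p) ^ 2))) := by
        rw [← rpow_sub_one_mul_add_rpow hpos]; ring
    _ = -(p * √(c₁ * c₂)) := by rw [sqrt_div_mul_add_div_one_add_sq hc₁ hc₂]

lemma mul_sqrt_mul_lt_pi_div_two_of_pos_on_Icc (hp : 0 < p) (hc₁ : 0 < c₁) (hc₂ : 0 < c₂)
    {V : ℝ → ℝ} {T : ℝ} (hT : 0 ≤ T) (hVpos : ∀ t ∈ Icc 0 T, 0 < V t)
    (hVdiff : ∀ t ∈ Icc 0 T, DifferentiableAt ℝ V t)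
    (hV' : ∀ t ∈ Ioo 0 T, deriv V t ≤ -c₁ * V t ^ (1 + p) - c₂ * V t ^ (1 - p)) :
    p * √(c₁ * c₂) * T < π / 2 := by
  set φ := fun s => arctan (√(c₁ / c₂) * V s ^ p)
  have hφ : ∀ t ∈ Icc 0 T, DifferentiableAt ℝ φ t := fun t ht =>
    ((((hVdiff t ht).hasDerivAt.rpow_const (Or.inl (hVpos t ht).ne')).const_mul _).arctan
      ).differentiableAt
  have hdecay : φ T - φ 0 ≤ -(p * √(c₁ * c₂)) * (T - 0) := by
    refine (convex_Icc 0 T).image_sub_le_mul_sub_of_deriv_le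
      (fun t ht => (hφ t ht).continuousAt.continuousWithinAt)
      (fun t ht => (hφ t (interior_subset ht)).differentiableWithinAt)
      (fun t ht => ?_) 0 (left_mem_Icc.2 hT) T (right_mem_Icc.2 hT) hT
    rw [interior_Icc] at ht
    obtain ⟨D, hD, hφD⟩ := hasDerivAt_arctan_mul_rpow_le hp hc₁ hc₂
      (hVdiff t (Ioo_subset_Icc_self ht)).hasDerivAt (hVpos t (Ioo_subset_Icc_self ht)) (hV' t ht)
    exact hφD.deriv ▸ hD
  have hφT : 0 < φ T := arctan_pos.2 (by have := hVpos T (right_mem_Icc.2 hT); positivity)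
  linarith [arctan_lt_pi_div_two (√(c₁ / c₂) * V 0 ^ p)]

end ArctanPotential

theorem fxts_settling_time_bound_general
    (c₁ c₂ μ : ℝ) (hc₁ : 0 < c₁) (hc₂ : 0 < c₂) (hμ : 1 < μ)
    (V : ℝ → ℝ) (hVnn : ∀ t : ℝ, 0 ≤ t → 0 ≤ V t)
    (hVdiff : ∀ t : ℝ, DifferentiableAt ℝ V t)
    (hV' : ∀ t : ℝ, 0 ≤ t → 0 < V t →
      deriv V t ≤ -c₁ * (V t) ^ (1 + 1 / μ) - c₂ * (V t) ^ (1 - 1 / μ)) :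
    ∃ t₀ : ℝ, 0 ≤ t₀ ∧ t₀ ≤ μ * Real.pi / (2 * Real.sqrt (c₁ * c₂)) ∧ V t₀ = 0 := by
  by_contra! hcon
  set T := μ * π / (2 * √(c₁ * c₂))
  have hμ₀ : 0 < μ := by linarith
  have hT : 0 ≤ T := by positivity
  have hVpos : ∀ t ∈ Icc 0 T, 0 < V t := fun t ht =>
    (hVnn t ht.1).lt_of_ne' (hcon t ht.1 ht.2)
  have hlt := mul_sqrt_mul_lt_pi_div_two_of_pos_on_Icc (one_div_pos.2 hμ₀) hc₁ hc₂ hT hVpos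
    (fun t _ => hVdiff t) (fun t ht => hV' t ht.1.le (hVpos t (Ioo_subset_Icc_self ht)))
  have hrate : 1 / μ * √(c₁ * c₂) * T = π / 2 := by
    have : 0 < √(c₁ * c₂) := by positivity
    simp only [T]
    field_simp
  exact hlt.ne hrate

/-- For the scalar differential inequality `V̇ ≤ -c₁ V^(1+1/μ) - c₂ V^(1-1/μ)`
with `c₁, c₂ > 0`, `μ > 1`, the time for `V` to reach `0` from any initial
value `V₀ > 0` is bounded above by `μπ/(2√(c₁c₂))`. -/
theorem fxts_settling_time_bound
    (c₁ c₂ μ V₀ : ℝ) (hc₁ : 0 < c₁) (hc₂ : 0 < c₂) (hμ : 1 < μ) (hV₀ : 0 < V₀)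
    (V : ℝ → ℝ) (hV0 : V 0 = V₀) (hVnn : ∀ t : ℝ, 0 ≤ t → 0 ≤ V t)
    (hVdiff : ∀ t : ℝ, DifferentiableAt ℝ V t)
    (hV' : ∀ t : ℝ, 0 ≤ t → 0 < V t →
      deriv V t ≤ -c₁ * (V t) ^ (1 + 1 / μ) - c₂ * (V t) ^ (1 - 1 / μ)) :
    ∃ t₀ : ℝ, 0 ≤ t₀ ∧ t₀ ≤ μ * Real.pi / (2 * Real.sqrt (c₁ * c₂)) ∧ V t₀ = 0 :=
  fxts_settling_time_bound_general c₁ c₂ μ hc₁ hc₂ hμ V hVnn hVdiff hV'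
end

section
/- Let q, δ ∈ ℝⁿ with ‖δ‖ ≤ Υ and ‖q‖ > 2Υ, let a, b > 0, μ > 2, and define F(q,δ) = qᵀδ (a‖q+δ‖^(2/μ) + b‖q+δ‖^(-2/μ)). Then F(q,δ) ≥ -Υ(a‖q‖^(1+2/μ) + 2^(2/μ) b ‖q‖^(1-2/μ)). -/
/-!
Bound the two terms of `F` from below separately. Cauchy–Schwarz gives
`-⟪q, δ⟫ ≤ ‖q‖ ‖δ‖`, and `‖q + δ‖ > ‖q‖ / 2` controls the negative power. For the positive power,
either `‖q + δ‖ ≤ ‖q‖`, or `‖q + δ‖ > ‖q‖` forces `-⟪q, δ⟫ ≤ ‖δ‖² / 2 ≤ ‖q‖ ‖δ‖ / 4`, which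
absorbs the factor `(‖q + δ‖ / ‖q‖) ^ (2 / μ) ≤ 2`.
-/

section

variable {E : Type*} [SeminormedAddCommGroup E]

lemma norm_div_two_lt_norm_add {x y : E} (h : 2 * ‖y‖ < ‖x‖) : ‖x‖ / 2 < ‖x + y‖ := by
  have := norm_sub_norm_le x (-y)
  rw [sub_neg_eq_add, norm_neg] at this
  linarith

variable [InnerProductSpace ℝ E] {x y : E} {α : ℝ}

lemma neg_inner_le_norm_mul_norm (x y : E) : -inner ℝ x y ≤ ‖x‖ * ‖y‖ :=
  (neg_le_abs _).trans (abs_real_inner_le_norm x y)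

lemma neg_inner_le_of_norm_le_norm_add (h : ‖x‖ ≤ ‖x + y‖) : -inner ℝ x y ≤ ‖y‖ ^ 2 / 2 := by
  have hsq : ‖x‖ ^ 2 ≤ ‖x + y‖ ^ 2 := pow_le_pow_left₀ (norm_nonneg x) h 2
  linarith [norm_add_sq_real x y]

lemma neg_inner_mul_norm_add_rpow_le (hα₀ : 0 ≤ α) (hα₁ : α ≤ 1) (h : 2 * ‖y‖ < ‖x‖) :
    -inner ℝ x y * ‖x + y‖ ^ α ≤ ‖y‖ * ‖x‖ ^ (1 + α) := by
  have hx : 0 < ‖x‖ := by linarith [norm_nonneg y]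
  rw [Real.rpow_one_add' hx.le (by linarith)]
  rcases le_or_gt ‖x + y‖ ‖x‖ with hle | hlt
  · calc -inner ℝ x y * ‖x + y‖ ^ α ≤ (‖x‖ * ‖y‖) * ‖x + y‖ ^ α := by
          gcongr; exact neg_inner_le_norm_mul_norm x y
      _ ≤ (‖x‖ * ‖y‖) * ‖x‖ ^ α := by gcongr
      _ = ‖y‖ * (‖x‖ * ‖x‖ ^ α) := by ring
  · have hinner : -inner ℝ x y ≤ ‖x‖ * ‖y‖ / 4 := by
      nlinarith [neg_inner_le_of_norm_le_norm_add hlt.le, norm_nonneg y]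
    have hrpow : ‖x + y‖ ^ α ≤ 2 * ‖x‖ ^ α :=
      calc ‖x + y‖ ^ α ≤ (2 * ‖x‖) ^ α := by
            gcongr; linarith [norm_add_le x y]
        _ = 2 ^ α * ‖x‖ ^ α := Real.mul_rpow zero_le_two hx.le
        _ ≤ 2 * ‖x‖ ^ α := by
            gcongr; exact Real.rpow_le_self_of_one_le one_le_two hα₁
    calc -inner ℝ x y * ‖x + y‖ ^ α ≤ (‖x‖ * ‖y‖ / 4) * (2 * ‖x‖ ^ α) := by
          gcongr
      _ ≤ ‖y‖ * (‖x‖ * ‖x‖ ^ α) := by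
          nlinarith [mul_nonneg (mul_nonneg hx.le (norm_nonneg y)) (Real.rpow_nonneg hx.le α)]

lemma neg_inner_mul_norm_add_rpow_neg_le (hα : 0 ≤ α) (h : 2 * ‖y‖ < ‖x‖) :
    -inner ℝ x y * ‖x + y‖ ^ (-α) ≤ 2 ^ α * ‖y‖ * ‖x‖ ^ (1 - α) := by
  have hx : 0 < ‖x‖ := by linarith [norm_nonneg y]
  have hrpow : ‖x + y‖ ^ (-α) ≤ 2 ^ α * ‖x‖ ^ (-α) :=
    calc ‖x + y‖ ^ (-α) ≤ (‖x‖ / 2) ^ (-α) :=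
          Real.rpow_le_rpow_of_nonpos (by positivity) (norm_div_two_lt_norm_add h).le
            (neg_nonpos.mpr hα)
      _ = 2 ^ α * ‖x‖ ^ (-α) := by
          rw [Real.div_rpow hx.le zero_le_two, Real.rpow_neg zero_le_two, div_inv_eq_mul,
            mul_comm]
  calc -inner ℝ x y * ‖x + y‖ ^ (-α) ≤ (‖x‖ * ‖y‖) * ‖x + y‖ ^ (-α) := by
        gcongr; exact neg_inner_le_norm_mul_norm x y
    _ ≤ (‖x‖ * ‖y‖) * (2 ^ α * ‖x‖ ^ (-α)) := by gcongr
    _ = 2 ^ α * ‖y‖ * ‖x‖ ^ (1 - α) := by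
        rw [sub_eq_add_neg, Real.rpow_add hx, Real.rpow_one]; ring

end

theorem F_lower_bound_general
    (n : ℕ) (q δ : EuclideanSpace ℝ (Fin n)) (Υ a b μ : ℝ)
    (hδ : ‖δ‖ ≤ Υ) (hq : 2 * Υ < ‖q‖)
    (ha : 0 < a) (hb : 0 < b) (hμ : 2 < μ) :
    -Υ * (a * ‖q‖ ^ (1 + 2 / μ) + 2 ^ (2 / μ) * b * ‖q‖ ^ (1 - 2 / μ)) ≤
      (inner ℝ q δ : ℝ) * (a * ‖q + δ‖ ^ (2 / μ) + b * ‖q + δ‖ ^ (-(2 / μ))) := by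
  have hα₀ : 0 ≤ 2 / μ := by positivity
  have hα₁ : 2 / μ ≤ 1 := (div_le_one (by linarith)).mpr hμ.le
  have hδq : 2 * ‖δ‖ < ‖q‖ := by linarith
  have hA := mul_le_mul_of_nonneg_left
    (neg_inner_mul_norm_add_rpow_le hα₀ hα₁ hδq) ha.le
  have hB := mul_le_mul_of_nonneg_left
    (neg_inner_mul_norm_add_rpow_neg_le hα₀ hδq) hb.le
  have hA' : a * (‖δ‖ * ‖q‖ ^ (1 + 2 / μ)) ≤ a * (Υ * ‖q‖ ^ (1 + 2 / μ)) := by gcongr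
  have hB' : b * (2 ^ (2 / μ) * ‖δ‖ * ‖q‖ ^ (1 - 2 / μ)) ≤
      b * (2 ^ (2 / μ) * Υ * ‖q‖ ^ (1 - 2 / μ)) := by gcongr
  linarith

/-- Lower bound on `F(q,δ) = ⟪q,δ⟫ (a‖q+δ‖^(2/μ) + b‖q+δ‖^(-2/μ))` when
`‖δ‖ ≤ Υ` and `‖q‖ > 2Υ`. -/
theorem F_lower_bound
    (n : ℕ) (q δ : EuclideanSpace ℝ (Fin n)) (Υ a b μ : ℝ)
    (hΥ : 0 < Υ) (hδ : ‖δ‖ ≤ Υ) (hq : 2 * Υ < ‖q‖)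
    (ha : 0 < a) (hb : 0 < b) (hμ : 2 < μ) :
    -Υ * (a * ‖q‖ ^ (1 + 2 / μ) + 2 ^ (2 / μ) * b * ‖q‖ ^ (1 - 2 / μ)) ≤
      (inner ℝ q δ : ℝ) * (a * ‖q + δ‖ ^ (2 / μ) + b * ‖q + δ‖ ^ (-(2 / μ))) :=
  F_lower_bound_general n q δ Υ a b μ hδ hq ha hb hμ
end
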